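/- arXiv:1512.08096 — 5 statements merged into one kernel-verified Lean document; each statement's English description precedes it below -/
import Mathlib

section
/- Let γ ∈ (0,1] and let k be a positive integer with kγ ≥ 2. Then for every ε ∈ (0,1), B(kγ/2, γ/2) ≤ ε^{γ/2-1} · 2/(kγ) + (2/γ) · ε^{γ/2}. -/
open MeasureTheory

/-- The Euler Beta function `B(a,b) = ∫₀¹ u^{a-1}(1-u)^{b-1} du`. -/
noncomputable def Beta (a b : ℝ) : ℝ :=
  ∫ u in (0:ℝ)..1, u ^ (a - 1) * (1 - u) ^ (b - 1)

/-!
Split the Beta integral at `1 - ε`. On `[0, 1 - ε]` the factor `(1 - u)^(b-1)` is at most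
`ε^(b-1)` because `b ≤ 1`, leaving `∫ u^(a-1) ≤ 1/a`; on `[1 - ε, 1]` the factor `u^(a-1)` is at
most `1` because `a ≥ 1`, leaving `∫ (1 - u)^(b-1) = ε^b / b`. Take `a = kγ/2`, `b = γ/2`.
-/

section BetaSplit

variable {a b ε : ℝ}

lemma intervalIntegrable_beta_integrand_left (ha : 0 < a) (hε : 0 < ε) :
    IntervalIntegrable (fun u : ℝ => u ^ (a - 1) * (1 - u) ^ (b - 1)) volume 0 (1 - ε) := by
  refine (intervalIntegral.intervalIntegrable_rpow' (by linarith)).mul_continuousOn ?_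
  refine (continuousOn_const.sub continuousOn_id).rpow_const fun u hu => Or.inl ?_
  have hu1 : u < 1 := hu.2.trans_lt (max_lt one_pos (by linarith))
  exact (sub_pos.2 hu1).ne'

lemma intervalIntegrable_one_sub_rpow (hb : 0 < b) :
    IntervalIntegrable (fun u : ℝ => (1 - u) ^ (b - 1)) volume (1 - ε) 1 := by
  simpa using ((intervalIntegral.intervalIntegrable_rpow' (a := 0) (b := ε)
    (by linarith : (-1 : ℝ) < b - 1)).comp_sub_left 1).symm

lemma intervalIntegrable_beta_integrand_right (hb : 0 < b) (hε : ε < 1) :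
    IntervalIntegrable (fun u : ℝ => u ^ (a - 1) * (1 - u) ^ (b - 1)) volume (1 - ε) 1 := by
  refine (intervalIntegrable_one_sub_rpow hb).continuousOn_mul ?_
  refine continuousOn_id.rpow_const fun u hu => Or.inl ?_
  exact ((lt_min (by linarith) one_pos).trans_le hu.1).ne'

lemma integral_one_sub_rpow (hb : 0 < b) :
    ∫ u in (1 - ε)..1, (1 - u) ^ (b - 1) = ε ^ b / b := by
  rw [intervalIntegral.integral_comp_sub_left (fun x : ℝ => x ^ (b - 1)), sub_self,
    sub_sub_cancel, integral_rpow (Or.inl (by linarith)), sub_add_cancel,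
    Real.zero_rpow hb.ne', sub_zero]

lemma integral_beta_integrand_left_le (ha : 0 < a) (hb : b ≤ 1) (hε : ε ∈ Set.Ioo (0 : ℝ) 1) :
    ∫ u in (0 : ℝ)..(1 - ε), u ^ (a - 1) * (1 - u) ^ (b - 1) ≤ ε ^ (b - 1) / a := by
  obtain ⟨hε0, hε1⟩ := hε
  have hpow : IntervalIntegrable (fun u : ℝ => u ^ (a - 1)) volume 0 (1 - ε) :=
    intervalIntegral.intervalIntegrable_rpow' (by linarith)
  calc ∫ u in (0 : ℝ)..(1 - ε), u ^ (a - 1) * (1 - u) ^ (b - 1)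
      ≤ ∫ u in (0 : ℝ)..(1 - ε), ε ^ (b - 1) * u ^ (a - 1) := by
        refine intervalIntegral.integral_mono_on (by linarith)
          (intervalIntegrable_beta_integrand_left ha hε0) (hpow.const_mul _) fun u hu => ?_
        rw [mul_comm]
        exact mul_le_mul_of_nonneg_right
          (Real.rpow_le_rpow_of_nonpos hε0 (by linarith [hu.2]) (by linarith))
          (Real.rpow_nonneg hu.1 _)
    _ = ε ^ (b - 1) * ((1 - ε) ^ a / a) := by
        rw [intervalIntegral.integral_const_mul, integral_rpow (Or.inl (by linarith)),
          sub_add_cancel, Real.zero_rpow ha.ne', sub_zero]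
    _ ≤ ε ^ (b - 1) * (1 / a) := by
        gcongr
        exact Real.rpow_le_one (by linarith) (by linarith) ha.le
    _ = ε ^ (b - 1) / a := mul_one_div _ _

lemma integral_beta_integrand_right_le (ha : 1 ≤ a) (hb : 0 < b) (hε : ε ∈ Set.Ioo (0 : ℝ) 1) :
    ∫ u in (1 - ε)..1, u ^ (a - 1) * (1 - u) ^ (b - 1) ≤ ε ^ b / b := by
  obtain ⟨hε0, hε1⟩ := hε
  rw [← integral_one_sub_rpow hb]
  refine intervalIntegral.integral_mono_on (by linarith)
    (intervalIntegrable_beta_integrand_right hb hε1) (intervalIntegrable_one_sub_rpow hb)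
    fun u hu => ?_
  refine mul_le_of_le_one_left (Real.rpow_nonneg (by linarith [hu.2]) _) ?_
  exact Real.rpow_le_one (by linarith [hu.1]) hu.2 (by linarith)

lemma Beta_le_rpow_div_add_rpow_div (ha : 1 ≤ a) (hb : b ∈ Set.Ioc (0 : ℝ) 1)
    (hε : ε ∈ Set.Ioo (0 : ℝ) 1) :
    Beta a b ≤ ε ^ (b - 1) / a + ε ^ b / b := by
  rw [Beta, ← intervalIntegral.integral_add_adjacent_intervals
    (intervalIntegrable_beta_integrand_left (by linarith) hε.1)
    (intervalIntegrable_beta_integrand_right hb.1 hε.2)]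
  exact add_le_add (integral_beta_integrand_left_le (by linarith) hb.2 hε)
    (integral_beta_integrand_right_le ha hb.1 hε)

end BetaSplit

theorem beta_split_bound_general (γ : ℝ) (hγ : γ ∈ Set.Ioc (0:ℝ) 1)
    (k : ℕ) (hkγ : 2 ≤ (k : ℝ) * γ)
    (ε : ℝ) (hε : ε ∈ Set.Ioo (0:ℝ) 1) :
    Beta ((k : ℝ) * γ / 2) (γ / 2) ≤
      ε ^ (γ / 2 - 1) * (2 / ((k : ℝ) * γ)) + (2 / γ) * ε ^ (γ / 2) := by
  have hb : γ / 2 ∈ Set.Ioc (0 : ℝ) 1 := ⟨by linarith [hγ.1], by linarith [hγ.2]⟩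
  have ha : 1 ≤ (k : ℝ) * γ / 2 := by linarith
  calc Beta ((k : ℝ) * γ / 2) (γ / 2)
      ≤ ε ^ (γ / 2 - 1) / ((k : ℝ) * γ / 2) + ε ^ (γ / 2) / (γ / 2) :=
        Beta_le_rpow_div_add_rpow_div ha hb hε
    _ = ε ^ (γ / 2 - 1) * (2 / ((k : ℝ) * γ)) + (2 / γ) * ε ^ (γ / 2) := by
        rw [div_div_eq_mul_div, div_div_eq_mul_div, mul_div_assoc, mul_comm (2 / γ),
          mul_div_assoc]

/-- For `γ ∈ (0,1]` and `kγ ≥ 2`, splitting the Beta integral at `1 - ε` gives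
`B(kγ/2, γ/2) ≤ ε^{γ/2-1}·2/(kγ) + (2/γ)·ε^{γ/2}`. -/
theorem beta_split_bound (γ : ℝ) (hγ : γ ∈ Set.Ioc (0:ℝ) 1)
    (k : ℕ) (hk : 1 ≤ k) (hkγ : 2 ≤ (k : ℝ) * γ)
    (ε : ℝ) (hε : ε ∈ Set.Ioo (0:ℝ) 1) :
    Beta ((k : ℝ) * γ / 2) (γ / 2) ≤
      ε ^ (γ / 2 - 1) * (2 / ((k : ℝ) * γ)) + (2 / γ) * ε ^ (γ / 2) :=
  beta_split_bound_general γ hγ k hkγ ε hε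
end

section
/- Let γ ∈ (0,1] and let k be a positive integer with kγ ≥ 2. Then B(kγ/2, γ/2) ≤ 4/(γ · k^{γ/2}). -/
open MeasureTheory

lemma log_le_div_exp (x : ℝ) (hx : 0 < x) : Real.log x ≤ x / Real.exp 1 := by
  have h := Real.log_le_sub_one_of_pos (x := x / Real.exp 1) (by positivity)
  rw [Real.log_div (ne_of_gt hx) (by positivity), Real.log_exp] at h
  linarith

lemma beta_le (a b : ℝ) (ha : 1 ≤ a) (hb : 0 < b) (hb1 : b ≤ 1) :
    Beta a b ≤ a ^ (-b) / Real.exp 1 + a ^ (-b) / b := by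
  have ha0 : (0:ℝ) < a := by linarith
  set s : ℝ := 1 - 1/a with hs_def
  have h1s : 1 - s = 1/a := by ring
  have hia : (0:ℝ) < 1/a := by positivity
  have hs0 : 0 ≤ s := by rw [hs_def, sub_nonneg, div_le_one ha0]; exact ha
  have hs1 : s ≤ 1 := by rw [hs_def]; linarith
  have hab : 0 ≤ a - 1 := by linarith
  -- integrability on [0, s]
  have hcont1 : ContinuousOn (fun u : ℝ => u ^ (a-1) * (1-u) ^ (b-1)) (Set.uIcc 0 s) := by
    rw [Set.uIcc_of_le hs0]
    intro u hu
    apply ContinuousWithinAt.mul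
    · exact (Real.continuousAt_rpow_const u (a-1) (Or.inr hab)).continuousWithinAt
    · apply ContinuousAt.continuousWithinAt
      have hu2 := hu.2
      rw [hs_def] at hu2
      have h1u : (1:ℝ) - u ≠ 0 := ne_of_gt (by linarith)
      exact (Real.continuousAt_rpow_const _ (b-1) (Or.inl h1u)).comp
        ((continuous_const.sub continuous_id).continuousAt)
  have I1 : IntervalIntegrable (fun u : ℝ => u ^ (a-1) * (1-u) ^ (b-1)) volume 0 s :=
    hcont1.intervalIntegrable
  -- integrability of (1-u)^(b-1) on [s,1]
  have I2 : IntervalIntegrable (fun u : ℝ => (1-u) ^ (b-1)) volume s 1 := by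
    have := (intervalIntegral.intervalIntegrable_rpow' (a := 0) (b := 1 - s)
      (r := b - 1) (by linarith)).comp_sub_left 1
    simpa using this.symm
  have hcontpow : ContinuousOn (fun u : ℝ => u ^ (a-1)) (Set.uIcc s 1) := by
    intro u hu
    exact (Real.continuousAt_rpow_const u (a-1) (Or.inr hab)).continuousWithinAt
  have I3 : IntervalIntegrable (fun u : ℝ => u ^ (a-1) * (1-u) ^ (b-1)) volume s 1 :=
    I2.continuousOn_mul hcontpow
  have hsplit : Beta a b = (∫ u in (0:ℝ)..s, u ^ (a-1) * (1-u) ^ (b-1))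
      + ∫ u in s..(1:ℝ), u ^ (a-1) * (1-u) ^ (b-1) :=
    (intervalIntegral.integral_add_adjacent_intervals I1 I3).symm
  -- bound on [0,s]
  have hbd1 : (∫ u in (0:ℝ)..s, u ^ (a-1) * (1-u) ^ (b-1))
      ≤ ∫ u in (0:ℝ)..s, u ^ (a-1) * (1/a) ^ (b-1) := by
    apply intervalIntegral.integral_mono_on hs0 I1
    · exact (intervalIntegral.intervalIntegrable_rpow' (by linarith)).mul_const _
    · intro u hu
      have hu0 : 0 ≤ u := hu.1
      have hu2 := hu.2
      rw [hs_def] at hu2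
      have h1u : 1/a ≤ 1 - u := by linarith
      have : (1-u) ^ (b-1) ≤ (1/a) ^ (b-1) :=
        Real.rpow_le_rpow_of_nonpos hia h1u (by linarith)
      exact mul_le_mul_of_nonneg_left this (Real.rpow_nonneg hu0 _)
  have hint1 : (∫ u in (0:ℝ)..s, u ^ (a-1) * (1/a) ^ (b-1))
      = s ^ a / a * (1/a) ^ (b-1) := by
    rw [intervalIntegral.integral_mul_const,
      integral_rpow (Or.inl (by linarith)),
      show a - 1 + 1 = a by ring, Real.zero_rpow (ne_of_gt ha0)]
    ring
  -- bound on [s,1]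
  have hbd2 : (∫ u in s..(1:ℝ), u ^ (a-1) * (1-u) ^ (b-1))
      ≤ ∫ u in s..(1:ℝ), (1-u) ^ (b-1) := by
    apply intervalIntegral.integral_mono_on hs1 I3 I2
    intro u hu
    have h1u : 0 ≤ 1 - u := by linarith [hu.2]
    have : u ^ (a-1) ≤ 1 := Real.rpow_le_one (le_trans hs0 hu.1) hu.2 hab
    calc u ^ (a-1) * (1-u) ^ (b-1) ≤ 1 * (1-u) ^ (b-1) :=
          mul_le_mul_of_nonneg_right this (Real.rpow_nonneg h1u _)
      _ = (1-u) ^ (b-1) := one_mul _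
  have hint2 : (∫ u in s..(1:ℝ), (1-u) ^ (b-1)) = (1/a) ^ b / b := by
    rw [show (∫ u in s..(1:ℝ), (1-u) ^ (b-1))
        = ∫ u in s..(1:ℝ), (fun x : ℝ => x ^ (b-1)) (1 - u) from rfl,
      intervalIntegral.integral_comp_sub_left (fun x : ℝ => x ^ (b-1)) 1,
      integral_rpow (Or.inl (by linarith)),
      show b - 1 + 1 = b by ring, show (1:ℝ) - 1 = 0 by norm_num,
      Real.zero_rpow (ne_of_gt hb), h1s]
    ring
  -- s^a ≤ exp(-1)
  have hsa : s ^ a ≤ Real.exp (-1) := by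
    rcases eq_or_lt_of_le hs0 with h | h
    · rw [← h, Real.zero_rpow (ne_of_gt ha0)]; positivity
    · have hlog : Real.log s ≤ -(1/a) := by
        have h2 := Real.log_le_sub_one_of_pos h
        rw [hs_def] at h2 ⊢; linarith
      have halog : a * Real.log s ≤ -1 := by
        have h3 := mul_le_mul_of_nonneg_left hlog (le_of_lt ha0)
        have h4 : a * -(1/a) = -1 := by field_simp
        linarith
      calc s ^ a = Real.exp (a * Real.log s) := by
            rw [Real.rpow_def_of_pos h, mul_comm]
        _ ≤ Real.exp (-1) := Real.exp_le_exp.mpr halog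
  have hia_rpow : (1/a) ^ b = a ^ (-b) := by
    rw [one_div, ← Real.rpow_neg_one, ← Real.rpow_mul (le_of_lt ha0)]
    norm_num
  have hia_rpow' : (1/a) ^ (b-1) = a ^ (1-b) := by
    rw [one_div, ← Real.rpow_neg_one, ← Real.rpow_mul (le_of_lt ha0)]
    ring_nf
  have key1 : s ^ a / a * (1/a) ^ (b-1) ≤ a ^ (-b) / Real.exp 1 := by
    rw [hia_rpow']
    have h1 : s ^ a / a * a ^ (1-b) = s ^ a * a ^ (-b) := by
      rw [show (1:ℝ) - b = 1 + -b by ring, Real.rpow_add ha0, Real.rpow_one]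
      field_simp
    rw [h1]
    have h2 : s ^ a * a ^ (-b) ≤ Real.exp (-1) * a ^ (-b) :=
      mul_le_mul_of_nonneg_right hsa (Real.rpow_nonneg (le_of_lt ha0) _)
    calc s ^ a * a ^ (-b) ≤ Real.exp (-1) * a ^ (-b) := h2
      _ = a ^ (-b) / Real.exp 1 := by rw [Real.exp_neg]; ring
  calc Beta a b ≤ s ^ a / a * (1/a) ^ (b-1) + (1/a) ^ b / b := by
        rw [hsplit, ← hint1, ← hint2]; exact add_le_add hbd1 hbd2
    _ ≤ a ^ (-b) / Real.exp 1 + a ^ (-b) / b := by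
        rw [hia_rpow]; exact add_le_add key1 le_rfl

/-- For `γ ∈ (0,1]` and `kγ ≥ 2`, `B(kγ/2, γ/2) ≤ 4/(γ k^{γ/2})`. -/
theorem beta_asymptotic_bound (γ : ℝ) (hγ : γ ∈ Set.Ioc (0:ℝ) 1)
    (k : ℕ) (hk : 1 ≤ k) (hkγ : 2 ≤ (k : ℝ) * γ) :
    Beta ((k : ℝ) * γ / 2) (γ / 2) ≤ 4 / (γ * (k : ℝ) ^ (γ / 2)) := by
  obtain ⟨hγ0, hγ1⟩ := hγ
  have hk0 : (0:ℝ) < (k:ℝ) := by exact_mod_cast hk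
  set b : ℝ := γ / 2 with hb_def
  have hb0 : 0 < b := by rw [hb_def]; positivity
  have hbh : b ≤ 1/2 := by rw [hb_def]; linarith
  have ha1 : 1 ≤ (k:ℝ) * γ / 2 := by linarith
  have hbound := beta_le ((k:ℝ)*γ/2) b ha1 hb0 (by linarith)
  set E : ℝ := Real.exp 1 with hE_def
  have hE : (5/2:ℝ) ≤ E := by
    have h := Real.exp_one_gt_d9
    rw [hE_def]; norm_num at h ⊢; linarith
  have hE0 : (0:ℝ) < E := by linarith
  set B' : ℝ := b ^ (-b) with hB_def
  have hB0 : 0 ≤ B' := Real.rpow_nonneg hb0.le _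
  -- B' ≤ E/(E-1)
  have hBE : B' * (E - 1) ≤ E := by
    have h1 := log_le_div_exp (1/b) (by positivity)
    rw [Real.log_div one_ne_zero hb0.ne', Real.log_one] at h1
    have hL : -b * Real.log b ≤ 1/E := by
      have h2 := mul_le_mul_of_nonneg_left h1 hb0.le
      have h3 : b * ((1/b) / Real.exp 1) = 1/E := by
        rw [hE_def]; field_simp
      rw [h3] at h2; linarith [h2]
    have hB1 : B' ≤ Real.exp (1/E) := by
      rw [hB_def, Real.rpow_def_of_pos hb0]
      exact Real.exp_le_exp.mpr (by linarith)
    have h4 := Real.add_one_le_exp (-(1/E))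
    have h5 : Real.exp (1/E) * Real.exp (-(1/E)) = 1 := by
      rw [← Real.exp_add]; norm_num
    have h6 : Real.exp (1/E) * (-(1/E) + 1) ≤ 1 := by
      calc Real.exp (1/E) * (-(1/E) + 1) ≤ Real.exp (1/E) * Real.exp (-(1/E)) :=
            mul_le_mul_of_nonneg_left h4 (Real.exp_pos _).le
        _ = 1 := h5
    have h7 : Real.exp (1/E) * (E - 1) ≤ E := by
      have h8 : Real.exp (1/E) * (E - 1) = (Real.exp (1/E) * (-(1/E) + 1)) * E := by
        field_simp; ring
      rw [h8]
      calc (Real.exp (1/E) * (-(1/E) + 1)) * E ≤ 1 * E :=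
            mul_le_mul_of_nonneg_right h6 hE0.le
        _ = E := one_mul E
    calc B' * (E - 1) ≤ Real.exp (1/E) * (E - 1) :=
          mul_le_mul_of_nonneg_right hB1 (by linarith)
      _ ≤ E := h7
  have main : B'/E + B'/b ≤ 2/b := by
    rw [div_add_div _ _ (ne_of_gt hE0) hb0.ne', div_le_div_iff₀ (by positivity) hb0]
    nlinarith [mul_le_mul_of_nonneg_right hBE (show (0:ℝ) ≤ b + E by linarith),
      mul_pos hb0 hE0, mul_nonneg hB0 hb0.le]
  have hK : (0:ℝ) < (k:ℝ) ^ b := Real.rpow_pos_of_pos hk0 b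
  have hkb : (k:ℝ) ^ (-b) = ((k:ℝ) ^ b)⁻¹ := Real.rpow_neg hk0.le b
  have ha_eq : (k:ℝ) * γ / 2 = (k:ℝ) * b := by rw [hb_def]; ring
  have habk : ((k:ℝ) * γ / 2) ^ (-b) = (k:ℝ) ^ (-b) * B' := by
    rw [ha_eq, Real.mul_rpow hk0.le hb0.le, hB_def]
  calc Beta ((k:ℝ) * γ / 2) b
      ≤ ((k:ℝ)*γ/2) ^ (-b) / E + ((k:ℝ)*γ/2) ^ (-b) / b := hbound
    _ = ((k:ℝ) ^ b)⁻¹ * (B'/E + B'/b) := by rw [habk, hkb]; ring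
    _ ≤ ((k:ℝ) ^ b)⁻¹ * (2/b) := mul_le_mul_of_nonneg_left main (by positivity)
    _ = 4 / (γ * (k:ℝ) ^ b) := by
        rw [hb_def]; field_simp; ring
end

section
/- Let γ ∈ (0,1], C > 0 and T ≥ 0. Then the series ∑_{k=1}^∞ C^k (∏_{l=1}^{k-1} B(lγ/2, γ/2)) · T^{kγ/2} converges (where the empty product equals 1). -/
/-!
Since `B(a, b) = Γ(a) Γ(b) / Γ(a + b)`, the product of Beta values telescopes and the `k`-th
term is `x ^ k / Γ(k γ / 2)` with `x = C Γ(γ/2) T^{γ/2}`: a Mittag-Leffler series.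
Log-convexity of `Γ` gives `Γ(s + a) ≥ Γ(s) (s - 1) ^ a`, so the ratio of consecutive terms
tends to `0`.
-/

open MeasureTheory

open Real Filter Topology

lemma Complex.betaIntegral_ofReal (a b : ℝ) : Complex.betaIntegral a b = Beta a b := by
  rw [Beta, ← intervalIntegral.integral_ofReal]
  refine intervalIntegral.integral_congr fun u hu => ?_
  rw [Set.uIcc_of_le zero_le_one] at hu
  simp only [Complex.ofReal_mul, Complex.ofReal_cpow hu.1, Complex.ofReal_cpow (sub_nonneg.2 hu.2)]
  push_cast
  rfl

lemma Beta_eq_beta {a b : ℝ} (ha : 0 < a) (hb : 0 < b) :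
    Beta a b = ProbabilityTheory.beta a b := by
  rw [ProbabilityTheory.beta_eq_betaIntegralReal a b ha hb, Complex.betaIntegral_ofReal,
    Complex.ofReal_re]

lemma prod_beta_nat_mul {c : ℝ} (hc : 0 < c) (k : ℕ) :
    ∏ l ∈ Finset.Icc 1 k, ProbabilityTheory.beta (l * c) c =
      Gamma c ^ (k + 1) / Gamma ((k + 1) * c) := by
  induction k with
  | zero => simp [(Gamma_pos_of_pos hc).ne']
  | succ k ih =>
    rw [Finset.prod_Icc_succ_top (Nat.le_add_left 1 k), ih, ProbabilityTheory.beta]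
    have hk : 0 < Gamma ((k + 1) * c) := Gamma_pos_of_pos (by positivity)
    have hk' : 0 < Gamma ((k + 1 + 1) * c) := Gamma_pos_of_pos (by positivity)
    push_cast
    rw [show (k + 1) * c + c = (k + 1 + 1) * c by ring]
    field_simp
    ring

/- The slope of `log ∘ Γ` on `[s - 1, s]` is `log (s - 1)` by the functional equation, and
log-convexity bounds it by the slope on `[s, s + a]`. -/
lemma Gamma_mul_rpow_le_Gamma_add {s a : ℝ} (hs : 1 < s) (ha : 0 < a) :
    Gamma s * (s - 1) ^ a ≤ Gamma (s + a) := by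
  have hs1 : 0 < s - 1 := sub_pos.2 hs
  have hΓs : 0 < Gamma s := Gamma_pos_of_pos (by linarith)
  have hslope := convexOn_log_Gamma.slope_mono_adjacent (x := s - 1) (y := s) (z := s + a)
    hs1 (by simp only [Set.mem_Ioi]; linarith) (by linarith) (by linarith)
  have hrec : Gamma s = (s - 1) * Gamma (s - 1) := by
    simpa using Gamma_add_one hs1.ne'
  have hlog : log (Gamma s) - log (Gamma (s - 1)) = log (s - 1) := by
    rw [hrec, log_mul hs1.ne' (Gamma_pos_of_pos hs1).ne', add_sub_cancel_right]
  simp only [Function.comp_apply, sub_sub_cancel, add_sub_cancel_left, div_one] at hslope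
  rw [hlog, le_div_iff₀ ha] at hslope
  rw [← log_le_log_iff (by positivity) (Gamma_pos_of_pos (by linarith)),
    log_mul hΓs.ne' (rpow_pos_of_pos hs1 a).ne', log_rpow hs1]
  linarith

lemma tendsto_Gamma_div_Gamma_add {a : ℝ} (ha : 0 < a) :
    Tendsto (fun s => Gamma s / Gamma (s + a)) atTop (𝓝 0) := by
  have hlim : Tendsto (fun s : ℝ => (s - 1) ^ (-a)) atTop (𝓝 0) :=
    (tendsto_rpow_neg_atTop ha).comp (tendsto_atTop_add_const_right _ (-1) tendsto_id)
  refine tendsto_of_tendsto_of_tendsto_of_le_of_le' tendsto_const_nhds hlim ?_ ?_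
  · filter_upwards [eventually_gt_atTop 0] with s hs
    exact div_nonneg (Gamma_pos_of_pos hs).le (Gamma_pos_of_pos (by linarith)).le
  · filter_upwards [eventually_gt_atTop 1] with s hs
    have hs1 : 0 < s - 1 := sub_pos.2 hs
    rw [div_le_iff₀ (Gamma_pos_of_pos (by linarith)), rpow_neg hs1.le, ← div_eq_inv_mul,
      le_div_iff₀ (rpow_pos_of_pos hs1 a)]
    exact Gamma_mul_rpow_le_Gamma_add hs ha

lemma summable_pow_div_Gamma_nat_mul {a : ℝ} (ha : 0 < a) (x : ℝ) :
    Summable fun n : ℕ => x ^ n / Gamma (n * a) := by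
  have hlim :
      Tendsto (fun n : ℕ => |x| * (Gamma (n * a) / Gamma (n * a + a))) atTop (𝓝 0) := by
    simpa using ((tendsto_Gamma_div_Gamma_add ha).comp
      (tendsto_natCast_atTop_atTop.atTop_mul_const ha)).const_mul |x|
  refine summable_of_ratio_norm_eventually_le one_half_lt_one ?_
  filter_upwards [hlim.eventually (ge_mem_nhds one_half_pos), eventually_ge_atTop 1] with n hn hn1
  have hΓ : 0 < Gamma (n * a) := Gamma_pos_of_pos (by positivity)
  calc ‖x ^ (n + 1) / Gamma ((n + 1 : ℕ) * a)‖
      = |x| * (Gamma (n * a) / Gamma (n * a + a)) * ‖x ^ n / Gamma (n * a)‖ := by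
        have hΓ' : 0 < Gamma (n * a + a) := Gamma_pos_of_pos (by positivity)
        rw [Nat.cast_succ, add_one_mul, norm_div, norm_div, norm_pow, norm_pow,
          Real.norm_of_nonneg hΓ.le, Real.norm_of_nonneg hΓ'.le, Real.norm_eq_abs]
        field_simp
        ring
    _ ≤ 1 / 2 * ‖x ^ n / Gamma (n * a)‖ := by gcongr

theorem parametrix_series_summable_general (γ C T : ℝ)
    (hγ : γ ∈ Set.Ioc (0:ℝ) 1) (hT : 0 ≤ T) :
    Summable (fun k : ℕ =>
      C ^ (k + 1) * (∏ l ∈ Finset.Icc 1 k, Beta ((l : ℝ) * γ / 2) (γ / 2)) *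
        T ^ (((k : ℝ) + 1) * γ / 2)) := by
  have hγ2 : 0 < γ / 2 := half_pos hγ.1
  set x := C * Gamma (γ / 2) * T ^ (γ / 2)
  have hterm (k : ℕ) :
      C ^ (k + 1) * (∏ l ∈ Finset.Icc 1 k, Beta ((l : ℝ) * γ / 2) (γ / 2)) *
        T ^ (((k : ℝ) + 1) * γ / 2) = x ^ (k + 1) / Gamma ((k + 1 : ℕ) * (γ / 2)) := by
    have hbeta (l : ℕ) (hl : l ∈ Finset.Icc 1 k) :
        Beta ((l : ℝ) * γ / 2) (γ / 2) = ProbabilityTheory.beta (l * (γ / 2)) (γ / 2) := by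
      rw [mul_div_assoc, Beta_eq_beta (mul_pos (Nat.cast_pos.2 (Finset.mem_Icc.1 hl).1) hγ2) hγ2]
    have hpow : T ^ (((k : ℝ) + 1) * γ / 2) = (T ^ (γ / 2)) ^ (k + 1) := by
      rw [← rpow_natCast, ← rpow_mul hT]
      push_cast
      ring_nf
    rw [Finset.prod_congr rfl hbeta, prod_beta_nat_mul hγ2, hpow]
    push_cast
    ring
  simp_rw [hterm]
  exact (summable_nat_add_iff 1).2 (summable_pow_div_Gamma_nat_mul hγ2 x)

/-- The parametrix series `∑_{k≥1} C^k (∏_{l=1}^{k-1} B(lγ/2, γ/2)) T^{kγ/2}` converges. -/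
theorem parametrix_series_summable (γ C T : ℝ)
    (hγ : γ ∈ Set.Ioc (0:ℝ) 1) (hC : 0 < C) (hT : 0 ≤ T) :
    Summable (fun k : ℕ =>
      C ^ (k + 1) * (∏ l ∈ Finset.Icc 1 k, Beta ((l : ℝ) * γ / 2) (γ / 2)) *
        T ^ (((k : ℝ) + 1) * γ / 2)) :=
  parametrix_series_summable_general γ C T hγ hT
end

section
/- Let Λ ≥ 1 and C_b ≥ 0, and consider the one-dimensional Gaussian density g(m, a; y', y) = (2πa)^{-1/2} exp(-(y - y' - m)²/(2a)). Then there exist constants C > 0 and c > 0, depending only on Λ and C_b, such that for every τ ∈ (0,1], every a ∈ [Λ^{-1}τ, Λτ], every m ∈ ℝ with |m| ≤ C_b τ, and all y', y ∈ ℝ, the mixed partial derivatives satisfy: |∂_m ∂_{y'} g| ≤ C τ^{-1} · c τ^{-1/2} exp(-c(y-y')²/τ), |∂_a ∂_{y'} g| ≤ C τ^{-3/2} · c τ^{-1/2} exp(-c(y-y')²/τ), |∂_m ∂²_{y'} g| ≤ C τ^{-3/2} · c τ^{-1/2} exp(-c(y-y')²/τ), and |∂_a ∂²_{y'} g| ≤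 C τ^{-2} · c τ^{-1/2} exp(-c(y-y')²/τ). -/
/-!
With `u = y - y' - m`, the density depends on `m` and `y'` only through `u`, so `∂_m g = ∂_{y'} g`,
and it solves the heat equation `∂_a g = ½ ∂²_{y'} g`. The four mixed derivatives are therefore
`∂²_{y'} g`, `½ ∂³_{y'} g`, `∂³_{y'} g` and `½ ∂⁴_{y'} g`, and `∂ⁿ_{y'} g = a^{-n/2} Heₙ(u/√a) g`
with `Heₙ` the Hermite polynomials. The four coefficients, in `v = u/√a`, are at most
`2 (1 + v²)²` in absolute value, and `(1 + v²)² e^{-v²/2} ≤ 64 e^{-v²/4}` since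
`e^{v²/8} ≥ 1 + v²/8`: the polynomial factor costs half of the Gaussian exponent. Finally `a ≍ τ`
turns `a^{-(n+1)/2}` into `τ^{-(n+1)/2}`, and `(y - y')² ≤ 2u² + 2m²` with `|m| ≤ C_b τ` recentres
the Gaussian at `y'` at the price of the factor `e^{Λ C_b²}`.
-/

/-- The one-dimensional Gaussian density `g(m, a; y', y) = (2πa)^{-1/2} exp(-(y-y'-m)²/(2a))`. -/
noncomputable def gauss (m a y' y : ℝ) : ℝ :=
  (2 * Real.pi * a) ^ (-(1:ℝ) / 2) * Real.exp (-(y - y' - m) ^ 2 / (2 * a))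

open Real

theorem rpow_neg_nat_div_two {x : ℝ} (hx : 0 ≤ x) (k : ℕ) : x ^ (-(k : ℝ) / 2) = (√x ^ k)⁻¹ := by
  rw [neg_div, rpow_neg hx, sqrt_eq_rpow, ← rpow_natCast, ← rpow_mul hx]
  ring_nf

theorem one_add_sq_mul_exp_neg_half_le {t : ℝ} (ht : 0 ≤ t) :
    (1 + t) ^ 2 * exp (-t / 2) ≤ 64 * exp (-t / 4) := by
  have hpoly : (1 + t) ^ 2 ≤ 64 * exp (t / 4) := by
    have hexp : exp (t / 4) = exp (t / 8) ^ 2 := by rw [← exp_nat_mul]; ring_nf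
    nlinarith [add_one_le_exp (t / 8)]
  calc (1 + t) ^ 2 * exp (-t / 2) ≤ 64 * exp (t / 4) * exp (-t / 2) := by gcongr
    _ = 64 * exp (-t / 4) := by rw [mul_assoc, ← exp_add]; ring_nf

theorem exp_neg_sq_sub_div_le (x m : ℝ) {b : ℝ} (hb : 0 < b) :
    exp (-(x - m) ^ 2 / b) ≤ exp (m ^ 2 / b) * exp (-x ^ 2 / (2 * b)) := by
  rw [← exp_add, exp_le_exp, div_add_div _ _ hb.ne' (by positivity),
    div_le_div_iff₀ hb (by positivity)]
  nlinarith [mul_nonneg (mul_nonneg hb.le hb.le) (sq_nonneg (x - 2 * m))]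

section Hermite

variable {a : ℝ}

theorem abs_hermite_two_le (ha : 0 < a) (u : ℝ) :
    |u ^ 2 / a ^ 2 - 1 / a| ≤ 2 * (1 + u ^ 2 / a) ^ 2 * (√a ^ 2)⁻¹ := by
  obtain ⟨σ, hσ, rfl⟩ : ∃ σ, 0 < σ ∧ σ ^ 2 = a := ⟨√a, by positivity, sq_sqrt ha.le⟩
  obtain ⟨v, rfl⟩ : ∃ v, v * σ = u := ⟨u / σ, div_mul_cancel₀ _ hσ.ne'⟩
  have hform : (v * σ) ^ 2 / (σ ^ 2) ^ 2 - 1 / σ ^ 2 = (v ^ 2 - 1) * (σ ^ 2)⁻¹ := by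
    field_simp
  rw [sqrt_sq hσ.le, hform, abs_mul, abs_of_pos (by positivity : 0 < (σ ^ 2)⁻¹),
    show (v * σ) ^ 2 / σ ^ 2 = v ^ 2 by field_simp]
  gcongr
  exact abs_le.2 ⟨by nlinarith [sq_nonneg v], by nlinarith [sq_nonneg v]⟩

theorem abs_hermite_three_le (ha : 0 < a) (u : ℝ) :
    |u ^ 3 / a ^ 3 - 3 * u / a ^ 2| ≤ 2 * (1 + u ^ 2 / a) ^ 2 * (√a ^ 3)⁻¹ := by
  obtain ⟨σ, hσ, rfl⟩ : ∃ σ, 0 < σ ∧ σ ^ 2 = a := ⟨√a, by positivity, sq_sqrt ha.le⟩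
  obtain ⟨v, rfl⟩ : ∃ v, v * σ = u := ⟨u / σ, div_mul_cancel₀ _ hσ.ne'⟩
  have hform : (v * σ) ^ 3 / (σ ^ 2) ^ 3 - 3 * (v * σ) / (σ ^ 2) ^ 2
      = (v ^ 3 - 3 * v) * (σ ^ 3)⁻¹ := by
    field_simp
  rw [sqrt_sq hσ.le, hform, abs_mul, abs_of_pos (by positivity : 0 < (σ ^ 3)⁻¹),
    show (v * σ) ^ 2 / σ ^ 2 = v ^ 2 by field_simp]
  gcongr
  exact abs_le.2 ⟨by nlinarith [sq_nonneg (v ^ 2 + v / 4), sq_nonneg (v - 1 / 2)],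
    by nlinarith [sq_nonneg (v ^ 2 - v / 4), sq_nonneg (v + 1 / 2)]⟩

theorem abs_hermite_three_div_two_le (ha : 0 < a) (u : ℝ) :
    |(u ^ 3 / a ^ 3 - 3 * u / a ^ 2) / 2| ≤ 2 * (1 + u ^ 2 / a) ^ 2 * (√a ^ 3)⁻¹ := by
  rw [abs_div, abs_two]
  linarith [abs_hermite_three_le ha u, abs_nonneg (u ^ 3 / a ^ 3 - 3 * u / a ^ 2)]

theorem abs_hermite_four_div_two_le (ha : 0 < a) (u : ℝ) :
    |(u ^ 4 / a ^ 4 - 6 * u ^ 2 / a ^ 3 + 3 / a ^ 2) / 2|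
      ≤ 2 * (1 + u ^ 2 / a) ^ 2 * (√a ^ 4)⁻¹ := by
  obtain ⟨σ, hσ, rfl⟩ : ∃ σ, 0 < σ ∧ σ ^ 2 = a := ⟨√a, by positivity, sq_sqrt ha.le⟩
  obtain ⟨v, rfl⟩ : ∃ v, v * σ = u := ⟨u / σ, div_mul_cancel₀ _ hσ.ne'⟩
  have hform : ((v * σ) ^ 4 / (σ ^ 2) ^ 4 - 6 * (v * σ) ^ 2 / (σ ^ 2) ^ 3 + 3 / (σ ^ 2) ^ 2) / 2
      = (v ^ 4 - 6 * v ^ 2 + 3) / 2 * (σ ^ 4)⁻¹ := by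
    field_simp
  rw [sqrt_sq hσ.le, hform, abs_mul, abs_of_pos (by positivity : 0 < (σ ^ 4)⁻¹),
    show (v * σ) ^ 2 / σ ^ 2 = v ^ 2 by field_simp]
  gcongr
  exact abs_le.2 ⟨by nlinarith [sq_nonneg v, sq_nonneg (v ^ 2)], by nlinarith [sq_nonneg v]⟩

end Hermite

section Derivatives

variable {m a y' y : ℝ}

theorem gauss_eq_gauss_add (m a y' y : ℝ) : gauss m a y' y = gauss (m + y') a 0 y := by
  unfold gauss; ring_nf

theorem hasDerivAt_gauss_mean (ha : a ≠ 0) :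
    HasDerivAt (fun μ => gauss μ a y' y) ((y - y' - m) / a * gauss m a y' y) m := by
  have hexp : HasDerivAt (fun μ => -(y - y' - μ) ^ 2 / (2 * a)) ((y - y' - m) / a) m :=
    (((hasDerivAt_id m).const_sub (y - y')).pow 2).neg.div_const (2 * a)
      |>.congr_deriv (by field_simp; simp)
  exact (hexp.exp.const_mul ((2 * π * a) ^ (-(1:ℝ) / 2))).congr_deriv (by unfold gauss; ring)

theorem hasDerivAt_gauss_source (ha : a ≠ 0) :
    HasDerivAt (fun z => gauss m a z y) ((y - y' - m) / a * gauss m a y' y) y' := by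
  have h := (hasDerivAt_gauss_mean (y' := 0) (y := y) ha).comp_const_add m y'
  simp only [← gauss_eq_gauss_add] at h
  exact h.congr_deriv (by ring)

theorem hasDerivAt_gauss_variance (ha : 0 < a) :
    HasDerivAt (fun b => gauss m b y' y)
      (((y - y' - m) ^ 2 / a ^ 2 - 1 / a) / 2 * gauss m a y' y) a := by
  have h2πa : 2 * π * a ≠ 0 := by positivity
  have hpre : HasDerivAt (fun b => (2 * π * b) ^ (-(1:ℝ) / 2))
      (-(1 / (2 * a)) * (2 * π * a) ^ (-(1:ℝ) / 2)) a :=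
    ((hasDerivAt_id a).const_mul (2 * π)).rpow_const (p := -(1:ℝ) / 2) (Or.inl h2πa)
      |>.congr_deriv (by simp only [id, rpow_sub_one h2πa]; field_simp)
  have hexp : HasDerivAt (fun b => exp (-(y - y' - m) ^ 2 / (2 * b)))
      ((y - y' - m) ^ 2 / (2 * a ^ 2) * exp (-(y - y' - m) ^ 2 / (2 * a))) a := by
    have hquot : (fun b => -(y - y' - m) ^ 2 / (2 * b)) = fun b => -(y - y' - m) ^ 2 / 2 * b⁻¹ := by
      funext b; ring
    have := (hasDerivAt_inv ha.ne').const_mul (-(y - y' - m) ^ 2 / 2)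
    rw [← hquot] at this
    exact this.exp.congr_deriv (by field_simp)
  exact (hpre.mul hexp).congr_deriv (by unfold gauss; ring)

theorem deriv_gauss_source (ha : a ≠ 0) :
    deriv (fun z => gauss m a z y) = fun z => (y - z - m) / a * gauss m a z y :=
  funext fun _ => (hasDerivAt_gauss_source ha).deriv

theorem hasDerivAt_deriv_gauss_source (ha : a ≠ 0) :
    HasDerivAt (deriv (fun z => gauss m a z y))
      (((y - y' - m) ^ 2 / a ^ 2 - 1 / a) * gauss m a y' y) y' := by
  rw [deriv_gauss_source ha]
  exact ((((hasDerivAt_id y').const_sub y).sub_const m).div_const a).mul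
    (hasDerivAt_gauss_source ha) |>.congr_deriv (by simp only [id]; field_simp; ring)

theorem deriv_deriv_gauss_source (ha : a ≠ 0) :
    deriv (deriv (fun z => gauss m a z y))
      = fun z => ((y - z - m) ^ 2 / a ^ 2 - 1 / a) * gauss m a z y :=
  funext fun _ => (hasDerivAt_deriv_gauss_source ha).deriv

theorem deriv_mean_deriv_gauss_source (ha : a ≠ 0) :
    deriv (fun μ => deriv (fun z => gauss μ a z y) y') m
      = ((y - y' - m) ^ 2 / a ^ 2 - 1 / a) * gauss m a y' y := by
  simp only [deriv_gauss_source ha]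
  exact HasDerivAt.deriv <| ((((hasDerivAt_id m).const_sub (y - y')).div_const a).mul
    (hasDerivAt_gauss_mean ha)).congr_deriv (by simp only [id]; field_simp; ring)

theorem deriv_mean_deriv_deriv_gauss_source (ha : a ≠ 0) :
    deriv (fun μ => deriv (deriv (fun z => gauss μ a z y)) y') m
      = ((y - y' - m) ^ 3 / a ^ 3 - 3 * (y - y' - m) / a ^ 2) * gauss m a y' y := by
  simp only [deriv_deriv_gauss_source ha]
  exact HasDerivAt.deriv <| (((((hasDerivAt_id m).const_sub (y - y')).pow 2).div_const (a ^ 2)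
    |>.sub_const (1 / a)).mul (hasDerivAt_gauss_mean ha)).congr_deriv
      (by simp only [id, Pi.pow_apply]; field_simp; ring)

theorem deriv_variance_deriv_gauss_source (ha : 0 < a) :
    deriv (fun b => deriv (fun z => gauss m b z y) y') a
      = ((y - y' - m) ^ 3 / a ^ 3 - 3 * (y - y' - m) / a ^ 2) / 2 * gauss m a y' y := by
  have hnear : (fun b => deriv (fun z => gauss m b z y) y')
      =ᶠ[nhds a] fun b => (y - y' - m) * b⁻¹ * gauss m b y' y := by
    filter_upwards [eventually_ne_nhds ha.ne'] with b hb
    simp only [deriv_gauss_source hb, div_eq_mul_inv]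
  rw [hnear.deriv_eq]
  exact HasDerivAt.deriv <| (((hasDerivAt_inv ha.ne').const_mul (y - y' - m)).mul
    (hasDerivAt_gauss_variance ha)).congr_deriv (by field_simp; ring)

theorem deriv_variance_deriv_deriv_gauss_source (ha : 0 < a) :
    deriv (fun b => deriv (deriv (fun z => gauss m b z y)) y') a
      = ((y - y' - m) ^ 4 / a ^ 4 - 6 * (y - y' - m) ^ 2 / a ^ 3 + 3 / a ^ 2) / 2
        * gauss m a y' y := by
  have hnear : (fun b => deriv (deriv (fun z => gauss m b z y)) y')
      =ᶠ[nhds a] fun b => ((y - y' - m) ^ 2 * (b ^ 2)⁻¹ - b⁻¹) * gauss m b y' y := by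
    filter_upwards [eventually_ne_nhds ha.ne'] with b hb
    simp only [deriv_deriv_gauss_source hb, div_eq_mul_inv, one_mul]
  rw [hnear.deriv_eq]
  exact HasDerivAt.deriv <| (((((hasDerivAt_pow 2 a).inv (by positivity)).const_mul
    ((y - y' - m) ^ 2)).sub (hasDerivAt_inv ha.ne')).mul
      (hasDerivAt_gauss_variance ha)).congr_deriv
        (by simp only [Pi.sub_apply, Pi.inv_apply]; field_simp; ring)

end Derivatives

section Bounds

variable {Λ Cb τ m a y' y : ℝ}

theorem gauss_nonneg (ha : 0 < a) : 0 ≤ gauss m a y' y := by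
  unfold gauss; positivity

theorem gauss_le (ha : 0 < a) :
    gauss m a y' y ≤ (√a)⁻¹ * exp (-(y - y' - m) ^ 2 / (2 * a)) := by
  unfold gauss
  gcongr
  calc (2 * π * a) ^ (-(1:ℝ) / 2) ≤ a ^ (-(1:ℝ) / 2) :=
        rpow_le_rpow_of_nonpos ha (le_mul_of_one_le_left ha.le (by linarith [pi_gt_three]))
          (by norm_num)
    _ = (√a)⁻¹ := by simpa using rpow_neg_nat_div_two ha.le 1

theorem abs_mul_gauss_le (ha : 0 < a) {k : ℕ} {Q : ℝ}
    (hQ : |Q| ≤ 2 * (1 + (y - y' - m) ^ 2 / a) ^ 2 * (√a ^ k)⁻¹) :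
    |Q * gauss m a y' y| ≤ 128 * (√a ^ (k + 1))⁻¹ * exp (-(y - y' - m) ^ 2 / (4 * a)) := by
  have hs : 0 ≤ (y - y' - m) ^ 2 / a := by positivity
  calc |Q * gauss m a y' y| = |Q| * gauss m a y' y := by
        rw [abs_mul, abs_of_nonneg (gauss_nonneg ha)]
    _ ≤ 2 * (1 + (y - y' - m) ^ 2 / a) ^ 2 * (√a ^ k)⁻¹ *
          ((√a)⁻¹ * exp (-(y - y' - m) ^ 2 / (2 * a))) :=
        mul_le_mul hQ (gauss_le ha) (gauss_nonneg ha) (by positivity)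
    _ = 2 * (√a ^ (k + 1))⁻¹ *
          ((1 + (y - y' - m) ^ 2 / a) ^ 2 * exp (-((y - y' - m) ^ 2 / a) / 2)) := by
        rw [pow_succ √a k, mul_inv]; ring_nf
    _ ≤ 2 * (√a ^ (k + 1))⁻¹ * (64 * exp (-((y - y' - m) ^ 2 / a) / 4)) :=
        mul_le_mul_of_nonneg_left (one_add_sq_mul_exp_neg_half_le hs) (by positivity)
    _ = 128 * (√a ^ (k + 1))⁻¹ * exp (-(y - y' - m) ^ 2 / (4 * a)) := by ring_nf

theorem inv_sqrt_pow_le (hΛ : 0 < Λ) (hτ : 0 < τ) (ha : Λ⁻¹ * τ ≤ a) (k : ℕ) :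
    (√a ^ k)⁻¹ ≤ √Λ ^ k * (√τ ^ k)⁻¹ := by
  have hroot : (√a)⁻¹ ≤ √Λ * (√τ)⁻¹ := by
    have h := sqrt_le_sqrt ha
    rw [sqrt_mul (by positivity), sqrt_inv] at h
    calc (√a)⁻¹ ≤ ((√Λ)⁻¹ * √τ)⁻¹ := inv_anti₀ (by positivity) h
      _ = √Λ * (√τ)⁻¹ := by rw [mul_inv, inv_inv]
  rw [← inv_pow, ← inv_pow, ← mul_pow]
  gcongr

theorem exp_neg_sq_div_four_le (hΛ : 0 < Λ) (hτ : τ ∈ Set.Ioc 0 1) (ha₁ : Λ⁻¹ * τ ≤ a)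
    (ha₂ : a ≤ Λ * τ) (hm : |m| ≤ Cb * τ) :
    exp (-(y - y' - m) ^ 2 / (4 * a))
      ≤ exp (Λ * Cb ^ 2) * exp (-(8 * Λ)⁻¹ * (y - y') ^ 2 / τ) := by
  obtain ⟨hτ0, hτ1⟩ := hτ
  have ha : 0 < a := (by positivity : 0 < Λ⁻¹ * τ).trans_le ha₁
  have hΛa : τ ≤ Λ * a := (inv_mul_le_iff₀ hΛ).1 ha₁
  have hm2 : m ^ 2 ≤ (Cb * τ) ^ 2 := by
    rw [← sq_abs]; exact pow_le_pow_left₀ (abs_nonneg m) hm 2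
  calc exp (-(y - y' - m) ^ 2 / (4 * a))
      ≤ exp (m ^ 2 / (4 * a)) * exp (-(y - y') ^ 2 / (2 * (4 * a))) :=
        exp_neg_sq_sub_div_le (y - y') m (by positivity)
    _ ≤ exp (Λ * Cb ^ 2) * exp (-(8 * Λ)⁻¹ * (y - y') ^ 2 / τ) := by
        gcongr exp ?_ * exp ?_
        · rw [div_le_iff₀ (by positivity)]
          nlinarith [mul_le_mul_of_nonneg_left hΛa (sq_nonneg Cb), sq_nonneg Cb]
        · rw [show -(8 * Λ)⁻¹ * (y - y') ^ 2 / τ = -((y - y') ^ 2 / (8 * (Λ * τ))) by ring,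
            show -(y - y') ^ 2 / (2 * (4 * a)) = -((y - y') ^ 2 / (8 * a)) by ring]
          gcongr

theorem abs_mul_gauss_le_of_parabolic (hΛ : 1 ≤ Λ) (hτ : τ ∈ Set.Ioc 0 1)
    (ha₁ : Λ⁻¹ * τ ≤ a) (ha₂ : a ≤ Λ * τ) (hm : |m| ≤ Cb * τ) {k : ℕ} (hk : k ≤ 4) {Q : ℝ}
    (hQ : |Q| ≤ 2 * (1 + (y - y' - m) ^ 2 / a) ^ 2 * (√a ^ k)⁻¹) :
    |Q * gauss m a y' y| ≤ 1024 * Λ * √Λ ^ 5 * exp (Λ * Cb ^ 2) * (√τ ^ k)⁻¹ *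
      ((8 * Λ)⁻¹ * (√τ)⁻¹ * exp (-(8 * Λ)⁻¹ * (y - y') ^ 2 / τ)) := by
  have hΛ0 : 0 < Λ := one_pos.trans_le hΛ
  have hτ0 : 0 < τ := hτ.1
  have ha : 0 < a := (by positivity : 0 < Λ⁻¹ * τ).trans_le ha₁
  calc |Q * gauss m a y' y|
      ≤ 128 * (√a ^ (k + 1))⁻¹ * exp (-(y - y' - m) ^ 2 / (4 * a)) := abs_mul_gauss_le ha hQ
    _ ≤ 128 * (√Λ ^ (k + 1) * (√τ ^ (k + 1))⁻¹) *
          (exp (Λ * Cb ^ 2) * exp (-(8 * Λ)⁻¹ * (y - y') ^ 2 / τ)) := by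
        gcongr
        · exact inv_sqrt_pow_le hΛ0 hτ0 ha₁ _
        · exact exp_neg_sq_div_four_le hΛ0 hτ ha₁ ha₂ hm
    _ ≤ 128 * (√Λ ^ 5 * (√τ ^ (k + 1))⁻¹) *
          (exp (Λ * Cb ^ 2) * exp (-(8 * Λ)⁻¹ * (y - y') ^ 2 / τ)) := by
        gcongr
        exacts [one_le_sqrt.2 hΛ, by omega]
    _ = _ := by rw [pow_succ, mul_inv]; field_simp; ring

end Bounds

theorem gaussian_mixed_derivative_bounds_general (Λ Cb : ℝ) (hΛ : 1 ≤ Λ) :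
    ∃ C > (0:ℝ), ∃ c > (0:ℝ), ∀ τ : ℝ, τ ∈ Set.Ioc (0:ℝ) 1 →
      ∀ a : ℝ, Λ⁻¹ * τ ≤ a → a ≤ Λ * τ →
      ∀ m : ℝ, |m| ≤ Cb * τ →
      ∀ y' y : ℝ,
        |deriv (fun mm : ℝ => deriv (fun z : ℝ => gauss mm a z y) y') m|
          ≤ C * τ⁻¹ *
            (c * τ ^ (-(1:ℝ) / 2) * Real.exp (-c * (y - y') ^ 2 / τ)) ∧
        |deriv (fun aa : ℝ => deriv (fun z : ℝ => gauss m aa z y) y') a|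
          ≤ C * τ ^ (-(3:ℝ) / 2) *
            (c * τ ^ (-(1:ℝ) / 2) * Real.exp (-c * (y - y') ^ 2 / τ)) ∧
        |deriv (fun mm : ℝ => deriv (deriv (fun z : ℝ => gauss mm a z y)) y') m|
          ≤ C * τ ^ (-(3:ℝ) / 2) *
            (c * τ ^ (-(1:ℝ) / 2) * Real.exp (-c * (y - y') ^ 2 / τ)) ∧
        |deriv (fun aa : ℝ => deriv (deriv (fun z : ℝ => gauss m aa z y)) y') a|
          ≤ C * τ ^ (-(2:ℝ)) *
            (c * τ ^ (-(1:ℝ) / 2) * Real.exp (-c * (y - y') ^ 2 / τ)) := by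
  have hΛ0 : 0 < Λ := one_pos.trans_le hΛ
  refine ⟨1024 * Λ * √Λ ^ 5 * exp (Λ * Cb ^ 2), by positivity, (8 * Λ)⁻¹, by positivity,
    fun τ hτ a ha₁ ha₂ m hm y' y => ?_⟩
  have hτ0 : 0 < τ := hτ.1
  have ha : 0 < a := (by positivity : 0 < Λ⁻¹ * τ).trans_le ha₁
  have hhalf : τ ^ (-(1:ℝ) / 2) = (√τ)⁻¹ := by simpa using rpow_neg_nat_div_two hτ0.le 1
  have hone : τ⁻¹ = (√τ ^ 2)⁻¹ := by rw [sq_sqrt hτ0.le]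
  have hthreehalves : τ ^ (-(3:ℝ) / 2) = (√τ ^ 3)⁻¹ := by
    exact_mod_cast rpow_neg_nat_div_two hτ0.le 3
  have htwo : τ ^ (-(2:ℝ)) = (√τ ^ 4)⁻¹ := by rw [← rpow_neg_nat_div_two hτ0.le 4]; norm_num
  rw [hhalf, hone, hthreehalves, htwo, deriv_mean_deriv_gauss_source ha.ne',
    deriv_variance_deriv_gauss_source ha, deriv_mean_deriv_deriv_gauss_source ha.ne',
    deriv_variance_deriv_deriv_gauss_source ha]
  refine ⟨?_, ?_, ?_, ?_⟩ <;> refine abs_mul_gauss_le_of_parabolic hΛ hτ ha₁ ha₂ hm (by norm_num) ?_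
  exacts [abs_hermite_two_le ha _, abs_hermite_three_div_two_le ha _, abs_hermite_three_le ha _,
    abs_hermite_four_div_two_le ha _]

/-- Bounds on the mixed derivatives of the one-dimensional Gaussian density with respect
to the parameters `m`, `a` and the space variable `y'`. -/
theorem gaussian_mixed_derivative_bounds (Λ Cb : ℝ) (hΛ : 1 ≤ Λ) (hCb : 0 ≤ Cb) :
    ∃ C > (0:ℝ), ∃ c > (0:ℝ), ∀ τ : ℝ, τ ∈ Set.Ioc (0:ℝ) 1 →
      ∀ a : ℝ, Λ⁻¹ * τ ≤ a → a ≤ Λ * τ →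
      ∀ m : ℝ, |m| ≤ Cb * τ →
      ∀ y' y : ℝ,
        |deriv (fun mm : ℝ => deriv (fun z : ℝ => gauss mm a z y) y') m|
          ≤ C * τ⁻¹ *
            (c * τ ^ (-(1:ℝ) / 2) * Real.exp (-c * (y - y') ^ 2 / τ)) ∧
        |deriv (fun aa : ℝ => deriv (fun z : ℝ => gauss m aa z y) y') a|
          ≤ C * τ ^ (-(3:ℝ) / 2) *
            (c * τ ^ (-(1:ℝ) / 2) * Real.exp (-c * (y - y') ^ 2 / τ)) ∧
        |deriv (fun mm : ℝ => deriv (deriv (fun z : ℝ => gauss mm a z y)) y') m|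
          ≤ C * τ ^ (-(3:ℝ) / 2) *
            (c * τ ^ (-(1:ℝ) / 2) * Real.exp (-c * (y - y') ^ 2 / τ)) ∧
        |deriv (fun aa : ℝ => deriv (deriv (fun z : ℝ => gauss m aa z y)) y') a|
          ≤ C * τ ^ (-(2:ℝ)) *
            (c * τ ^ (-(1:ℝ) / 2) * Real.exp (-c * (y - y') ^ 2 / τ)) :=
  gaussian_mixed_derivative_bounds_general Λ Cb hΛ
end

section
/- Let α₁, α₂ ∈ (0,1] and C > 0. Then there exist 𝒯 > 0 and C' > 0, depending only on C, α₁ and α₂, such that the following holds. Let t < T be real numbers with T - t ≤ 𝒯, and let g₁, g₂ : (t,T] → [0,∞) be functions such that for i = 1, 2 the function s ↦ (s-t)^{(1-α_i)/2} g_i(s) is bounded on (t,T]; set G_i(s) = sup_{r ∈ (t,s]} (r-t)^{(1-α_i)/2} g_i(r). If for all s ∈ (t,T] and each i ∈ {1,2} one has g_i(s) ≤ C ( (s-t)^{(α_i-1)/2} + ∑_{j=1}^{2} (s-t)^{(α_i+α_j-1)/2} G_j(s) ), then G_i(T) ≤ C' for i = 1, 2. -/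
open Set Filter Topology

/-! Multiplying the assumed bound on `g_i(r)` by the weight `(r-t)^{(1-α_i)/2}` cancels the
singular term and leaves `G_i(s) ≤ C + ∑_j C (s-t)^{α_j/2} G_j(s)`, using that each `G_j` is
nondecreasing. On a short enough horizon every coefficient `C (s-t)^{α_j/2}` is at most `1/4`,
so the finitely many suprema bound one another: their sum is at most `4C`, and each of them
at most `2C`. -/

noncomputable def weightedSup (a t : ℝ) (f : ℝ → ℝ) (s : ℝ) : ℝ :=
  sSup ((fun r => (r - t) ^ ((1 - a) / 2) * f r) '' Ioc t s)

section WeightedSup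

variable {a t s : ℝ} {f : ℝ → ℝ}

theorem weightedSup_nonneg (hf : ∀ r ∈ Ioc t s, 0 ≤ f r) : 0 ≤ weightedSup a t f s := by
  refine Real.sSup_nonneg ?_
  rintro _ ⟨r, hr, rfl⟩
  exact mul_nonneg (Real.rpow_nonneg (sub_pos.2 hr.1).le _) (hf r hr)

theorem weightedSup_mono {r : ℝ}
    (hbdd : BddAbove ((fun r => (r - t) ^ ((1 - a) / 2) * f r) '' Ioc t s))
    (htr : t < r) (hrs : r ≤ s) : weightedSup a t f r ≤ weightedSup a t f s :=
  csSup_le_csSup hbdd ((nonempty_Ioc.2 htr).image _)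
    (image_mono (Ioc_subset_Ioc le_rfl hrs))

end WeightedSup

theorem exists_pos_forall_mul_rpow_le {ι : Type*} [Finite ι] {β : ι → ℝ}
    (hβ : ∀ i, 0 < β i) (C : ℝ) {ε : ℝ} (hε : 0 < ε) :
    ∃ δ > 0, ∀ x ∈ Icc 0 δ, ∀ i, C * x ^ β i ≤ ε := by
  have hlim : ∀ i, Tendsto (fun x : ℝ => C * x ^ β i) (𝓝 0) (𝓝 0) := fun i => by
    simpa [Real.zero_rpow (hβ i).ne'] using
      ((Real.continuousAt_rpow_const 0 (β i) (Or.inr (hβ i).le)).const_mul C).tendsto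
  obtain ⟨δ, hδ, hball⟩ := Metric.eventually_nhds_iff.1
    (eventually_all.2 fun i => (hlim i).eventually (ge_mem_nhds hε))
  refine ⟨δ / 2, half_pos hδ, fun x hx => hball ?_⟩
  rw [Real.dist_0_eq_abs, abs_of_nonneg hx.1]
  linarith [hx.2]

theorem rpow_mul_circular_rhs_eq {ι : Type*} [Fintype ι] {x : ℝ} (hx : 0 < x) (a C : ℝ)
    (α y : ι → ℝ) :
    x ^ ((1 - a) / 2) * (C * (x ^ ((a - 1) / 2) + ∑ j, x ^ ((a + α j - 1) / 2) * y j)) =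
      C + ∑ j, C * x ^ (α j / 2) * y j := by
  have hcancel : x ^ ((1 - a) / 2) * x ^ ((a - 1) / 2) = 1 := by
    rw [← Real.rpow_add hx, show (1 - a) / 2 + (a - 1) / 2 = 0 by ring, Real.rpow_zero]
  have hshift : ∀ j, x ^ ((1 - a) / 2) * x ^ ((a + α j - 1) / 2) = x ^ (α j / 2) := fun j => by
    rw [← Real.rpow_add hx]
    ring_nf
  rw [mul_left_comm, mul_add, hcancel, Finset.mul_sum, mul_add, mul_one, Finset.mul_sum]
  congr 1
  refine Finset.sum_congr rfl fun j _ => ?_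
  rw [← hshift j]
  ring

section Circular

variable {ι : Type*} [Fintype ι] {α : ι → ℝ} {g : ι → ℝ → ℝ} {C ε t T : ℝ}

theorem weightedSup_le_add_mul_sum (hε : 0 ≤ ε)
    (hg : ∀ i, ∀ s ∈ Ioc t T, 0 ≤ g i s)
    (hbdd : ∀ i, BddAbove ((fun r => (r - t) ^ ((1 - α i) / 2) * g i r) '' Ioc t T))
    (hsmall : ∀ x ∈ Ioc 0 (T - t), ∀ j, C * x ^ (α j / 2) ≤ ε)
    (hmain : ∀ s ∈ Ioc t T, ∀ i, g i s ≤ C * ((s - t) ^ ((α i - 1) / 2) +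
      ∑ j, (s - t) ^ ((α i + α j - 1) / 2) * weightedSup (α j) t (g j) s))
    {s : ℝ} (hs : s ∈ Ioc t T) (i : ι) :
    weightedSup (α i) t (g i) s ≤ C + ε * ∑ j, weightedSup (α j) t (g j) s := by
  have hsub : ∀ {r}, r ∈ Ioc t s → r ∈ Ioc t T := fun hr => ⟨hr.1, hr.2.trans hs.2⟩
  have hsupp_nonneg : ∀ j, ∀ r ∈ Ioc t T, 0 ≤ weightedSup (α j) t (g j) r := fun j r hr =>
    weightedSup_nonneg fun q hq => hg j q ⟨hq.1, hq.2.trans hr.2⟩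
  refine csSup_le ((nonempty_Ioc.2 hs.1).image _) ?_
  rintro _ ⟨r, hr, rfl⟩
  have hrt : 0 < r - t := sub_pos.2 hr.1
  have hterm : ∀ j, C * (r - t) ^ (α j / 2) * weightedSup (α j) t (g j) r ≤
      ε * weightedSup (α j) t (g j) s := fun j =>
    calc C * (r - t) ^ (α j / 2) * weightedSup (α j) t (g j) r
        ≤ ε * weightedSup (α j) t (g j) r :=
          mul_le_mul_of_nonneg_right (hsmall _ ⟨hrt, by linarith [hr.2, hs.2]⟩ j)
            (hsupp_nonneg j r (hsub hr))
      _ ≤ ε * weightedSup (α j) t (g j) s :=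
          mul_le_mul_of_nonneg_left (weightedSup_mono
            ((hbdd j).mono (image_mono (Ioc_subset_Ioc le_rfl hs.2))) hr.1 hr.2) hε
  calc (r - t) ^ ((1 - α i) / 2) * g i r
      ≤ (r - t) ^ ((1 - α i) / 2) * (C * ((r - t) ^ ((α i - 1) / 2) +
          ∑ j, (r - t) ^ ((α i + α j - 1) / 2) * weightedSup (α j) t (g j) r)) :=
        mul_le_mul_of_nonneg_left (hmain r (hsub hr) i) (Real.rpow_nonneg hrt.le _)
    _ = C + ∑ j, C * (r - t) ^ (α j / 2) * weightedSup (α j) t (g j) r :=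
        rpow_mul_circular_rhs_eq hrt _ _ _ _
    _ ≤ C + ε * ∑ j, weightedSup (α j) t (g j) s := by
        rw [Finset.mul_sum]
        exact add_le_add le_rfl (Finset.sum_le_sum fun j _ => hterm j)

end Circular

theorem le_two_mul_of_le_add_mul_sum {ι : Type*} [Fintype ι] {x : ι → ℝ} {C ε : ℝ}
    (hx : ∀ i, 0 ≤ x i) (hε : 0 ≤ ε) (hcard : Fintype.card ι * ε ≤ 1 / 2)
    (hle : ∀ i, x i ≤ C + ε * ∑ j, x j) (i : ι) : x i ≤ 2 * C := by
  have hsum_nonneg : 0 ≤ ∑ j, x j := Finset.sum_nonneg fun j _ => hx j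
  have hsum : ∑ j, x j ≤ Fintype.card ι * C + Fintype.card ι * ε * ∑ j, x j :=
    calc ∑ j, x j ≤ ∑ _j : ι, (C + ε * ∑ j, x j) := Finset.sum_le_sum fun j _ => hle j
      _ = Fintype.card ι * C + Fintype.card ι * ε * ∑ j, x j := by
        rw [Finset.sum_const, Finset.card_univ, nsmul_eq_mul]
        ring
  have hsum' : ∑ j, x j ≤ 2 * Fintype.card ι * C := by nlinarith
  nlinarith [hle i, hx i]

/-- The circular (Gronwall-type) argument for the weighted suprema
`G_i(s) = sup_{r ∈ (t,s]} (r-t)^{(1-α_i)/2} g_i(r)`: if on a small enough time horizon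
`g_i(s) ≤ C((s-t)^{(α_i-1)/2} + ∑_j (s-t)^{(α_i+α_j-1)/2} G_j(s))`, then the weighted
suprema are bounded by a constant depending only on `C, α₁, α₂`. -/
theorem circular_argument_bound (α : Fin 2 → ℝ) (C : ℝ)
    (hα : ∀ i, α i ∈ Set.Ioc (0:ℝ) 1) (hC : 0 < C) :
    ∃ 𝒯 > (0:ℝ), ∃ C' > (0:ℝ), ∀ t T : ℝ, t < T → T - t ≤ 𝒯 →
      ∀ g : Fin 2 → ℝ → ℝ,
        (∀ i, ∀ s ∈ Set.Ioc t T, 0 ≤ g i s) →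
        (∀ i, BddAbove
          ((fun r => (r - t) ^ ((1 - α i) / 2) * g i r) '' Set.Ioc t T)) →
      ∀ G : Fin 2 → ℝ → ℝ,
        (∀ i s, G i s =
          sSup ((fun r => (r - t) ^ ((1 - α i) / 2) * g i r) '' Set.Ioc t s)) →
        (∀ s ∈ Set.Ioc t T, ∀ i,
          g i s ≤ C * ((s - t) ^ ((α i - 1) / 2) +
            ∑ j, (s - t) ^ ((α i + α j - 1) / 2) * G j s)) →
      ∀ i, G i T ≤ C' := by
  obtain ⟨𝒯, h𝒯, hsmall⟩ := exists_pos_forall_mul_rpow_le (β := fun i => α i / 2)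
    (fun i => half_pos (hα i).1) C (ε := 1 / 4) (by norm_num)
  refine ⟨𝒯, h𝒯, 2 * C, by positivity, ?_⟩
  intro t T htT hT𝒯 g hg hbdd G hG hmain
  obtain rfl : G = fun i => weightedSup (α i) t (g i) := funext fun i => funext (hG i)
  have hT : T ∈ Ioc t T := ⟨htT, le_rfl⟩
  exact le_two_mul_of_le_add_mul_sum (fun j => weightedSup_nonneg (hg j)) (by norm_num)
    (by norm_num) (fun j => weightedSup_le_add_mul_sum (by norm_num) hg hbdd
      (fun x hx j => hsmall x ⟨hx.1.le, hx.2.trans hT𝒯⟩ j) hmain hT j)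
end
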